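/- Given a ubiquity monadic ideal I in a ubiquity monadic algebra U, the operator Υ descends well-definedly to the quotient algebra U/I: if p₁ and p₂ are congruent modulo I (i.e., p₁ + p₂ ∈ I, where + is symmetric difference), then Υp₁ and Υp₂ are congruent modulo I. -/
import Mathlib


/-- An existential quantifier on a Boolean algebra: normalized, increasing,
and quasi-multiplicative. -/
structure IsQuantifier {M : Type*} [BooleanAlgebra M] (E : M → M) : Prop where
  norm : E ⊥ = ⊥
  incr : ∀ p, p ≤ E p
  quasi_mul : ∀ p q, E (p ⊓ E q) = E p ⊓ E q

/-- A ubiquity operator on a monadic algebra `(M, E)`: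
(i) `Y p ⊓ Y q ≤ Y (p ⊓ q)`; (ii) `Y p ≤ Y (p ⊔ q)`;
(iii) `∀p ≤ Y p ≤ ∃p`, where `∀p = (E pᶜ)ᶜ`. -/
structure IsUbiquity {M : Type*} [BooleanAlgebra M] (E : M → M) (Y : M → M) : Prop where
  inf_le : ∀ p q, Y p ⊓ Y q ≤ Y (p ⊓ q)
  le_sup : ∀ p q, Y p ≤ Y (p ⊔ q)
  forall_le : ∀ p, (E pᶜ)ᶜ ≤ Y p
  le_exists : ∀ p, Y p ≤ E p

theorem ubiquity_well_defined_on_quotient {U : Type*} [BooleanAlgebra U] (E Y : U → U)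
    (hE : IsQuantifier E) (hY : IsUbiquity E Y) (I : Order.Ideal U)
    (hIE : ∀ p, p ∈ I → E p ∈ I) (hIY : ∀ p, p ∈ I → Y p ∈ I) :
    ∀ p₁ p₂ : U, (p₁ ⊓ p₂ᶜ) ⊔ (p₂ ⊓ p₁ᶜ) ∈ I →
      (Y p₁ ⊓ (Y p₂)ᶜ) ⊔ (Y p₂ ⊓ (Y p₁)ᶜ) ∈ I := by
  -- Y is monotone
  have mono : ∀ a b : U, a ≤ b → Y a ≤ Y b := by
    intro a b hab
    have := hY.le_sup a b
    rwa [sup_eq_right.mpr hab] at this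
  -- key: Y p ⊓ (Y q)ᶜ ≤ E (symmDiff p q)
  have key : ∀ p q : U, Y p ⊓ (Y q)ᶜ ≤ E (symmDiff p q) := by
    intro p q
    set d := symmDiff p q with hd
    have h1 : Y p ⊓ (E d)ᶜ ≤ Y q := by
      have hp : Y p ≤ Y (p ⊔ q) := hY.le_sup p q
      have hdc : (E d)ᶜ ≤ Y dᶜ := by
        have := hY.forall_le (dᶜ)
        rwa [compl_compl] at this
      calc Y p ⊓ (E d)ᶜ ≤ Y (p ⊔ q) ⊓ Y dᶜ := inf_le_inf hp hdc
        _ ≤ Y ((p ⊔ q) ⊓ dᶜ) := hY.inf_le _ _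
        _ = Y (p ⊓ q) := by
            congr 1
            have : (p ⊔ q) ⊓ dᶜ = (p ⊔ q) \ d := by rw [sdiff_eq]
            rw [this, hd, sup_sdiff_symmDiff]
        _ ≤ Y q := mono _ _ inf_le_right
    have hbot : Y p ⊓ (Y q)ᶜ ⊓ (E d)ᶜ ≤ ⊥ := by
      calc Y p ⊓ (Y q)ᶜ ⊓ (E d)ᶜ = (Y p ⊓ (E d)ᶜ) ⊓ (Y q)ᶜ := by ac_rfl
        _ ≤ Y q ⊓ (Y q)ᶜ := inf_le_inf_right _ h1
        _ = ⊥ := inf_compl_eq_bot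
    calc Y p ⊓ (Y q)ᶜ = (Y p ⊓ (Y q)ᶜ) ⊓ (E d ⊔ (E d)ᶜ) := by
          rw [sup_compl_eq_top, inf_top_eq]
      _ = (Y p ⊓ (Y q)ᶜ) ⊓ E d ⊔ (Y p ⊓ (Y q)ᶜ) ⊓ (E d)ᶜ := inf_sup_left _ _ _
      _ ≤ E d ⊔ ⊥ := sup_le_sup inf_le_right hbot
      _ = E d := sup_bot_eq _
  intro p₁ p₂ hmem
  have hd : symmDiff p₁ p₂ ∈ I := by
    rwa [symmDiff_def, sdiff_eq, sdiff_eq]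
  have hEd : E (symmDiff p₁ p₂) ∈ I := hIE _ hd
  have h1 : Y p₁ ⊓ (Y p₂)ᶜ ∈ I := I.lower (key p₁ p₂) hEd
  have h2 : Y p₂ ⊓ (Y p₁)ᶜ ∈ I := by
    have := key p₂ p₁
    rw [symmDiff_comm] at this
    exact I.lower this hEd
  exact I.sup_mem h1 h2
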